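/- arXiv:2307.08008 — 2 statements merged into one kernel-verified Lean document; each statement's English description precedes it below -/
import Mathlib

section
/- Let f be a real univariate polynomial and a < b real numbers with f(a)·f(b) ≠ 0. Then f has an even number of real roots (counted with multiplicity) in the open interval (a,b) if and only if f(a)·f(b) > 0. -/
/-!
Split off the real roots: `f = q * ∏ (X - r)` over the roots `r` of `f`, with `q` root-free and
hence, by the intermediate value theorem, of constant sign. So `f(a) f(b)` has the sign of
`∏ (a - r)(b - r)`, whose negative factors are exactly those with `r ∈ (a, b)`.
-/

open Polynomial

theorem Multiset.prod_pos_iff_even_card_filter_neg {R : Type*} [CommRing R] [LinearOrder R]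
    [IsStrictOrderedRing R] {s : Multiset R} (hs : (0 : R) ∉ s) :
    0 < s.prod ↔ Even (card (s.filter (· < 0))) := by
  induction s using Multiset.induction with
  | empty => simp
  | cons x s ih =>
    obtain ⟨hx, hs⟩ := not_or.mp (Multiset.mem_cons.not.mp hs)
    have hp : s.prod ≠ 0 := Multiset.prod_ne_zero hs
    rw [Multiset.prod_cons, Multiset.filter_cons]
    rcases (Ne.symm hx).lt_or_gt with hx | hx
    · rw [if_pos hx, Multiset.card_add, Multiset.card_singleton, add_comm, Nat.even_add_one,
        ← ih hs, mul_pos_iff, not_lt, hp.le_iff_lt]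
      simp [hx, hx.not_gt]
    · rw [if_neg hx.not_gt, zero_add, ← ih hs, mul_pos_iff_of_pos_left hx]

theorem mul_pos_of_continuousOn_of_ne_zero {α : Type*} [ConditionallyCompleteLinearOrder α]
    [TopologicalSpace α] [OrderTopology α] [DenselyOrdered α] {f : α → ℝ} {a b : α}
    (hf : ContinuousOn f (Set.uIcc a b)) (h : ∀ x ∈ Set.uIcc a b, f x ≠ 0) :
    0 < f a * f b := by
  by_contra! hab
  have h0 : (0 : ℝ) ∈ Set.uIcc (f a) (f b) := by
    rw [Set.mem_uIcc]
    rcases mul_nonpos_iff.mp hab with ⟨ha, hb⟩ | ⟨ha, hb⟩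
    exacts [Or.inr ⟨hb, ha⟩, Or.inl ⟨ha, hb⟩]
  obtain ⟨x, hx, hx0⟩ := intermediate_value_uIcc hf h0
  exact h x hx hx0

theorem sub_mul_sub_neg_iff_mem_Ioo {R : Type*} [CommRing R] [LinearOrder R]
    [IsStrictOrderedRing R] {a b : R} (hab : a < b) (r : R) :
    (a - r) * (b - r) < 0 ↔ r ∈ Set.Ioo a b := by
  rw [mul_neg_iff, Set.mem_Ioo]
  constructor
  · rintro (⟨h1, h2⟩ | ⟨h1, h2⟩) <;> constructor <;> linarith
  · rintro ⟨h1, h2⟩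
    exact Or.inr ⟨by linarith, by linarith⟩

theorem Polynomial.exists_eval_eq_eval_mul_prod_roots {R : Type*} [CommRing R] [IsDomain R]
    {f : R[X]} (hf : f ≠ 0) :
    ∃ q : R[X], (∀ x, q.eval x ≠ 0) ∧ ∀ x, f.eval x = q.eval x * (f.roots.map (x - ·)).prod := by
  obtain ⟨q, hfq, -, hq⟩ := f.exists_prod_multiset_X_sub_C_mul
  have hq0 : q ≠ 0 := by rintro rfl; exact hf (hfq.symm.trans (mul_zero _))
  refine ⟨q, fun x hx => ?_, fun x => ?_⟩
  · exact Multiset.notMem_zero x (hq ▸ (mem_roots hq0).mpr hx)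
  · conv_lhs => rw [← hfq]
    rw [eval_mul, eval_multiset_prod, Multiset.map_map, mul_comm]
    simp

/-- f has an even number of real roots (with multiplicity) in (a,b)
iff f(a)·f(b) > 0. -/
theorem stmt_0 (f : Polynomial ℝ) (a b : ℝ) (hab : a < b)
    (h : f.eval a * f.eval b ≠ 0) :
    Even (Multiset.card (f.roots.filter (fun r => r ∈ Set.Ioo a b))) ↔
      0 < f.eval a * f.eval b := by
  have hfa : f.eval a ≠ 0 := left_ne_zero_of_mul h
  have hfb : f.eval b ≠ 0 := right_ne_zero_of_mul h
  have hf : f ≠ 0 := by rintro rfl; simp at hfa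
  obtain ⟨q, hq0, hfq⟩ := exists_eval_eq_eval_mul_prod_roots hf
  have hq : 0 < q.eval a * q.eval b :=
    mul_pos_of_continuousOn_of_ne_zero q.continuous.continuousOn fun x _ => hq0 x
  have heval : f.eval a * f.eval b =
      q.eval a * q.eval b * (f.roots.map fun r => (a - r) * (b - r)).prod := by
    rw [hfq a, hfq b, Multiset.prod_map_mul]
    ring
  have hne : (0 : ℝ) ∉ f.roots.map fun r => (a - r) * (b - r) := by
    simp only [Multiset.mem_map, mem_roots hf, IsRoot.def, not_exists, not_and]
    intro r hr
    exact mul_ne_zero (sub_ne_zero.mpr fun har => hfa (har ▸ hr))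
      (sub_ne_zero.mpr fun hbr => hfb (hbr ▸ hr))
  rw [heval, mul_pos_iff_of_pos_left hq, Multiset.prod_pos_iff_even_card_filter_neg hne,
    Multiset.filter_map, Multiset.card_map]
  simp only [Function.comp_def, sub_mul_sub_neg_iff_mem_Ioo hab]
end

section
/- Let N ≥ 1 be an integer and t an odd integer with 1 ≤ t ≤ 2N−3 and t+4 ≤ 2N. Then the ratio of the lengths of the adjacent intervals (cos((t+2)π/(2N)), cos(tπ/(2N))) and (cos((t+4)π/(2N)), cos((t+2)π/(2N))), namely (cos(tπ/(2N)) − cos((t+2)π/(2N))) / (cos((t+2)π/(2N)) − cos((t+4)π/(2N))), lies in the interval [1/π, π]. -/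
open Real

lemma sin_smul_lemma {z lam : ℝ} (hz0 : 0 ≤ z) (hz : z ≤ π) (h0 : 0 ≤ lam) (h1 : lam ≤ 1) :
    lam * Real.sin z ≤ Real.sin (lam * z) := by
  have hc := strictConcaveOn_sin_Icc.concaveOn
  have h0π : (0:ℝ) ∈ Set.Icc 0 π := ⟨le_refl _, Real.pi_pos.le⟩
  have hzm : z ∈ Set.Icc 0 π := ⟨hz0, hz⟩
  have key := hc.2 hzm h0π h0 (by linarith : (0:ℝ) ≤ 1 - lam) (by ring)
  simpa [smul_eq_mul] using key

lemma cos_diff_eq (x d : ℝ) :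
    Real.cos x - Real.cos (x + 2*d) = 2 * Real.sin (x + d) * Real.sin d := by
  have e1 : Real.cos x = Real.cos (x+d) * Real.cos d + Real.sin (x+d) * Real.sin d := by
    rw [← Real.cos_sub]; ring_nf
  have e2 : Real.cos (x+2*d) = Real.cos (x+d) * Real.cos d - Real.sin (x+d) * Real.sin d := by
    rw [← Real.cos_add]; ring_nf
  rw [e1, e2]; ring

/-- the ratio of lengths of adjacent intervals between subsequent
Chebyshev roots lies in [1/π, π]. -/
theorem stmt_6 (N : ℕ) (hN : 1 ≤ N) (t : ℤ) (htodd : Odd t) (ht1 : 1 ≤ t)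
    (ht2 : t + 4 ≤ 2 * N) :
    (Real.cos (t * Real.pi / (2 * N)) - Real.cos ((t + 2) * Real.pi / (2 * N))) /
        (Real.cos ((t + 2) * Real.pi / (2 * N)) - Real.cos ((t + 4) * Real.pi / (2 * N)))
      ∈ Set.Icc (1 / Real.pi) Real.pi := by
  have hNpos : (0:ℝ) < N := by exact_mod_cast Nat.lt_of_lt_of_le Nat.zero_lt_one hN
  set h : ℝ := π / (2 * N) with hh_def
  have hπ : (0:ℝ) < π := Real.pi_pos
  have hπ3 : (3:ℝ) < π := Real.pi_gt_three
  have hh : 0 < h := by positivity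
  have htR : (1:ℝ) ≤ (t:ℝ) := by exact_mod_cast ht1
  have ht2R : (t:ℝ) + 4 ≤ 2 * N := by exact_mod_cast ht2
  have hπeq : π = 2 * N * h := by
    rw [hh_def]; field_simp
  -- rewrite the three arguments
  have arg1 : (t:ℝ) * π / (2 * N) = (t:ℝ) * h := by rw [hh_def]; ring
  have arg2 : ((t:ℝ) + 2) * π / (2 * N) = (t:ℝ) * h + 2 * h := by rw [hh_def]; ring
  have arg3 : ((t:ℝ) + 4) * π / (2 * N) = ((t:ℝ) * h + 2 * h) + 2 * h := by rw [hh_def]; ring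
  rw [arg1, arg2, arg3, cos_diff_eq ((t:ℝ)*h) h, cos_diff_eq ((t:ℝ)*h + 2*h) h]
  set a : ℝ := (t:ℝ) * h + h with ha_def
  set b : ℝ := (t:ℝ) * h + 2 * h + h with hb_def
  have hab : b = a + 2 * h := by rw [ha_def, hb_def]; ring
  have hsinh : 0 < Real.sin h := by
    apply Real.sin_pos_of_pos_of_lt_pi hh
    rw [hπeq]
    nlinarith
  have ha0 : 0 < a := by rw [ha_def]; nlinarith
  have haπ : a < π := by rw [ha_def, hπeq]; nlinarith
  have hb0 : 0 < b := by rw [hb_def]; nlinarith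
  have hbπ : b < π := by rw [hb_def, hπeq]; nlinarith
  have hsina : 0 < Real.sin a := Real.sin_pos_of_pos_of_lt_pi ha0 haπ
  have hsinb : 0 < Real.sin b := Real.sin_pos_of_pos_of_lt_pi hb0 hbπ
  have hratio : 2 * Real.sin a * Real.sin h / (2 * Real.sin b * Real.sin h)
      = Real.sin a / Real.sin b := by
    rw [show 2 * Real.sin a * Real.sin h = Real.sin a * (2 * Real.sin h) by ring,
      show 2 * Real.sin b * Real.sin h = Real.sin b * (2 * Real.sin h) by ring,
      mul_div_mul_right _ _ (by positivity : (2:ℝ) * Real.sin h ≠ 0)]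
  rw [hratio]
  -- lower bound: sin a ≥ (1/2) sin b
  have hlow : (1/2 : ℝ) * Real.sin b ≤ Real.sin a := by
    have hb3 : (t:ℝ) + 3 > 0 := by linarith
    have hlam0 : (0:ℝ) ≤ ((t:ℝ)+1)/((t:ℝ)+3) := by positivity
    have hlam1 : ((t:ℝ)+1)/((t:ℝ)+3) ≤ 1 := by
      rw [div_le_one hb3]; linarith
    have heq : ((t:ℝ)+1)/((t:ℝ)+3) * b = a := by
      rw [div_mul_eq_mul_div, div_eq_iff hb3.ne', ha_def, hb_def]; ring
    have := sin_smul_lemma hb0.le hbπ.le hlam0 hlam1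
    rw [heq] at this
    have hhalf : (1/2:ℝ) ≤ ((t:ℝ)+1)/((t:ℝ)+3) := by
      rw [le_div_iff₀ hb3]; linarith
    have hm := mul_le_mul_of_nonneg_right hhalf hsinb.le
    linarith
  -- upper bound: sin b ≥ (1/3) sin a
  have hup : (1/3 : ℝ) * Real.sin a ≤ Real.sin b := by
    have hk1 : (1:ℝ) ≤ 2*N - (t:ℝ) - 3 := by linarith
    have hden : (0:ℝ) < 2*N - (t:ℝ) - 1 := by linarith
    have hlam0 : (0:ℝ) ≤ (2*N - (t:ℝ) - 3)/(2*N - (t:ℝ) - 1) := by positivity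
    have hlam1 : (2*N - (t:ℝ) - 3)/(2*N - (t:ℝ) - 1) ≤ 1 := by
      rw [div_le_one hden]; linarith
    have hpa0 : 0 ≤ π - a := by linarith
    have hpaπ : π - a ≤ π := by linarith
    have heq : (2*(N:ℝ) - (t:ℝ) - 3)/(2*(N:ℝ) - (t:ℝ) - 1) * (π - a) = π - b := by
      rw [div_mul_eq_mul_div, div_eq_iff hden.ne', hπeq, ha_def, hb_def]; ring
    have := sin_smul_lemma hpa0 hpaπ hlam0 hlam1
    rw [heq, Real.sin_pi_sub, Real.sin_pi_sub] at this
    have hthird : (1/3:ℝ) ≤ (2*N - (t:ℝ) - 3)/(2*N - (t:ℝ) - 1) := by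
      rw [le_div_iff₀ hden]; linarith
    have hm := mul_le_mul_of_nonneg_right hthird hsina.le
    linarith
  constructor
  · rw [le_div_iff₀ hsinb]
    have h2 : (1:ℝ)/π ≤ 1/2 := by
      rw [div_le_div_iff₀ hπ (by norm_num)]; linarith
    have hm := mul_le_mul_of_nonneg_right h2 hsinb.le
    linarith
  · rw [div_le_iff₀ hsinb]
    have hm := mul_le_mul_of_nonneg_right hπ3.le hsinb.le
    linarith
end
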